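/- Let x be the output of Algorithm FractionalKnapsack with sample size t ∈ {1,…,n−1}, where the permutation π is chosen uniformly at random among all permutations of [n]. Then E[v(x)] ≥ (t/n) · Σ_{ℓ=t+1}^n 1/(ℓ−1) · v(x̃([n])) ≥ (t/n) · (ln n − ln t) · v(x̃([n])), where x̃([n]) is the fractional greedy solution of all n items and v(x) = Σ_{j=1}^n v_j x_j. In particular, for t = ⌊n/e⌋ (and n ≥ 3 so that t ≥ 1), E[v(x)] ≥ (⌊n/e⌋/n) · (ln n − ln⌊n/e⌋) · v(x̃([n])). -/

import Mathlib

/-- The fractional greedy solution of the sub-instance on item set `Q`: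
since the densities are strictly decreasing in the index, the items of `Q` are
packed greedily in increasing index order (= decreasing density order) until the
capacity `C` is exhausted; the first item that does not fully fit is packed
fractionally, all later items of `Q` get fraction `0`, and items outside `Q` get `0`. -/
noncomputable def greedySol (n : ℕ) (C : ℝ) (s : Fin n → ℝ) (Q : Finset (Fin n)) (j : Fin n) : ℝ :=
  if j ∈ Q then
    (min C (∑ k ∈ Q.filter (fun k => k ≤ j), s k)
      - min C (∑ k ∈ Q.filter (fun k => k < j), s k)) / s j
  else 0

/-- `Qset π ℓ` is the set `Q_ℓ` of items revealed in the first `ℓ` rounds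
(rounds are indexed `0,…,n−1`, so round `ℓ₀ : Fin n` is round `ℓ₀+1` in 1-based counting). -/
def Qset (n : ℕ) (π : Equiv.Perm (Fin n)) (ℓ : ℕ) : Finset (Fin n) :=
  (Finset.univ.filter (fun k : Fin n => (k : ℕ) < ℓ)).image π

/-- The output of Algorithm `FractionalKnapsack` with sample size `t`:
`x_{π(ℓ)} = 0` for the sample rounds `ℓ ≤ t` (0-based: rounds `< t`) and, for a later
round `ℓ`, `x_{π(ℓ)} = x̃_{π(ℓ)}(Q_ℓ) − (1/s_{π(ℓ)}) Σ_{k=t+1}^{ℓ−1} s_{π(k)} (x̃_{π(k)}(Q_{ℓ−1}) − x̃_{π(k)}(Q_ℓ))`. -/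
noncomputable def algFK (n : ℕ) (C : ℝ) (s : Fin n → ℝ) (π : Equiv.Perm (Fin n)) (t : ℕ)
    (j : Fin n) : ℝ :=
  if (π.symm j : ℕ) < t then 0 else
    greedySol n C s (Qset n π ((π.symm j : ℕ) + 1)) j
      - (∑ k ∈ Finset.univ.filter
            (fun k : Fin n => t ≤ (k : ℕ) ∧ (k : ℕ) < (π.symm j : ℕ)),
          s (π k) * (greedySol n C s (Qset n π (π.symm j : ℕ)) (π k)
            - greedySol n C s (Qset n π ((π.symm j : ℕ) + 1)) (π k))) / s j

/-!
In round `ℓ > t` the algorithm gains what the newest item `π(ℓ)` gets in the greedy solution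
of `Q_ℓ`, minus its density times the size that the post-sample items lose on its arrival.
In a uniformly random order the newest item is uniform in `Q_ℓ`, so the first part averages to
`E[v(x̃(Q_ℓ))] / ℓ ≥ v(x̃([n])) / n`: the restriction of `x̃([n])` to `Q_ℓ` is feasible, the greedy
solution is optimal on `Q_ℓ` (its critical density is a dual price), and `Q_ℓ` contains each
item with probability `ℓ / n`. The total size lost by the earlier items is at most the size the
newest item receives, and by exchangeability of the first `ℓ - 1` positions only a fraction
`(ℓ - 1 - t) / (ℓ - 1)` of it falls on post-sample items. Hence round `ℓ` contributes at least
`t / (ℓ - 1) · v(x̃([n])) / n`; summing and comparing with `∫ dx / x` gives both bounds.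
-/

open Finset

lemma sum_mul_le_sum_mul_of_dual_certificate {ι : Type*} (Q : Finset ι) (v s x y : ι → ℝ)
    {C ρ : ℝ} (hρ : 0 ≤ ρ) (hyC : ∑ j ∈ Q, s j * y j ≤ C)
    (hslack : ρ * ∑ j ∈ Q, s j * x j = ρ * C)
    (hlow : ∀ j ∈ Q, x j < y j → v j ≤ ρ * s j)
    (hhigh : ∀ j ∈ Q, y j < x j → ρ * s j ≤ v j) :
    ∑ j ∈ Q, v j * y j ≤ ∑ j ∈ Q, v j * x j := by
  have hpoint : ∀ j ∈ Q, ρ * (s j * x j) - ρ * (s j * y j) ≤ v j * x j - v j * y j := by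
    intro j hj
    rcases lt_trichotomy (x j) (y j) with h | h | h
    · nlinarith [hlow j hj h]
    · simp [h]
    · nlinarith [hhigh j hj h]
  have hsum := sum_le_sum hpoint
  rw [sum_sub_distrib, sum_sub_distrib, ← mul_sum, ← mul_sum, hslack] at hsum
  nlinarith

lemma sum_filter_le_eq_add_sum_filter_lt {ι M : Type*} [LinearOrder ι] [AddCommMonoid M]
    {Q : Finset ι} {j : ι} (hj : j ∈ Q) (f : ι → M) :
    ∑ k ∈ Q.filter (· ≤ j), f k = f j + ∑ k ∈ Q.filter (· < j), f k := by
  have : Q.filter (· ≤ j) = insert j (Q.filter (· < j)) := by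
    ext k; simp only [mem_filter, mem_insert, le_iff_lt_or_eq]; grind
  rw [this, sum_insert (by simp)]

lemma min_add_sub_min_div_mem_Icc (C x P : ℝ) :
    (min C (x + P) - min C P) / x ∈ Set.Icc 0 1 := by
  rcases le_total 0 x with hx | hx
  · have h₁ : 0 ≤ min C (x + P) - min C P := by simp only [min_def]; split_ifs <;> linarith
    have h₂ : min C (x + P) - min C P ≤ x := by simp only [min_def]; split_ifs <;> linarith
    exact ⟨div_nonneg h₁ hx, div_le_one_of_le₀ h₂ hx⟩
  · have h₁ : min C (x + P) - min C P ≤ 0 := by simp only [min_def]; split_ifs <;> linarith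
    have h₂ : x ≤ min C (x + P) - min C P := by simp only [min_def]; split_ifs <;> linarith
    rw [← neg_div_neg_eq]
    exact ⟨div_nonneg (by linarith) (by linarith),
      div_le_one_of_le₀ (by linarith) (by linarith)⟩

section Greedy

variable {n : ℕ} {C : ℝ} {s v : Fin n → ℝ} {Q : Finset (Fin n)}

lemma greedySol_of_mem {j : Fin n} (hj : j ∈ Q) :
    greedySol n C s Q j = (min C (s j + ∑ k ∈ Q.filter (· < j), s k)
      - min C (∑ k ∈ Q.filter (· < j), s k)) / s j := by
  rw [greedySol, if_pos hj, sum_filter_le_eq_add_sum_filter_lt hj]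

lemma greedySol_nonneg (j : Fin n) : 0 ≤ greedySol n C s Q j := by
  by_cases hj : j ∈ Q
  · rw [greedySol_of_mem hj]; exact (min_add_sub_min_div_mem_Icc _ _ _).1
  · simp [greedySol, hj]

lemma greedySol_le_one (j : Fin n) : greedySol n C s Q j ≤ 1 := by
  by_cases hj : j ∈ Q
  · rw [greedySol_of_mem hj]; exact (min_add_sub_min_div_mem_Icc _ _ _).2
  · simp [greedySol, hj]

lemma greedySol_insert_of_lt {a j : Fin n} (hja : j < a) :
    greedySol n C s (insert a Q) j = greedySol n C s Q j := by
  simp [greedySol, filter_insert, hja.ne, hja.not_ge, hja.not_gt]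

lemma sum_mul_greedySol (hC : 0 ≤ C) (hs : ∀ j, 0 < s j) (Q : Finset (Fin n)) :
    ∑ k ∈ Q, s k * greedySol n C s Q k = min C (∑ k ∈ Q, s k) := by
  induction Q using Finset.induction_on_max with
  | empty => simp [hC]
  | insert a Q ha ih =>
    have haQ : a ∉ Q := fun h => (ha a h).false
    have hfilter : (insert a Q).filter (· < a) = Q := by
      rw [filter_insert, if_neg (lt_irrefl a), filter_true_of_mem ha]
    rw [sum_insert haQ, sum_congr rfl fun k hk => by rw [greedySol_insert_of_lt (ha k hk)], ih,
      greedySol_of_mem (mem_insert_self a Q), hfilter, mul_div_cancel₀ _ (hs a).ne',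
      sum_insert haQ]
    ring

lemma lt_sum_filter_le_of_greedySol_lt_one (hs : ∀ j, 0 < s j) {j : Fin n} (hj : j ∈ Q)
    (h : greedySol n C s Q j < 1) : C < ∑ k ∈ Q.filter (· ≤ j), s k := by
  by_contra! hle
  have hlt : ∑ k ∈ Q.filter (· < j), s k ≤ C := by
    rw [sum_filter_le_eq_add_sum_filter_lt hj] at hle; linarith [hs j]
  rw [greedySol, if_pos hj, min_eq_right hle, min_eq_right hlt,
    sum_filter_le_eq_add_sum_filter_lt hj, add_sub_cancel_right, div_self (hs j).ne'] at h
  exact lt_irrefl 1 h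

lemma sum_filter_lt_lt_of_greedySol_pos (hs : ∀ j, 0 < s j) {j : Fin n} (hj : j ∈ Q)
    (h : 0 < greedySol n C s Q j) : ∑ k ∈ Q.filter (· < j), s k < C := by
  by_contra! hle
  have hle' : C ≤ ∑ k ∈ Q.filter (· ≤ j), s k := by
    rw [sum_filter_le_eq_add_sum_filter_lt hj]; linarith [hs j]
  rw [greedySol, if_pos hj, min_eq_left hle, min_eq_left hle', sub_self, zero_div] at h
  exact lt_irrefl 0 h

lemma le_of_greedySol_lt_one_of_pos (hs : ∀ j, 0 < s j) {j k : Fin n} (hj : j ∈ Q)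
    (hk : k ∈ Q) (hj1 : greedySol n C s Q j < 1) (hk0 : 0 < greedySol n C s Q k) : k ≤ j := by
  by_contra! hjk
  have hmono : ∑ i ∈ Q.filter (· ≤ j), s i ≤ ∑ i ∈ Q.filter (· < k), s i :=
    sum_le_sum_of_subset_of_nonneg
      (monotone_filter_right Q fun i _ (hi : i ≤ j) => hi.trans_lt hjk) fun i _ _ => (hs i).le
  linarith [lt_sum_filter_le_of_greedySol_lt_one hs hj hj1,
    sum_filter_lt_lt_of_greedySol_pos hs hk hk0]

lemma sum_mul_le_sum_mul_greedySol (hC : 0 ≤ C) (hs : ∀ j, 0 < s j) (hv : ∀ j, 0 ≤ v j)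
    (hd : Antitone fun j => v j / s j) (y : Fin n → ℝ) (hy0 : ∀ j ∈ Q, 0 ≤ y j)
    (hy1 : ∀ j ∈ Q, y j ≤ 1) (hyC : ∑ j ∈ Q, s j * y j ≤ C) :
    ∑ j ∈ Q, v j * y j ≤ ∑ j ∈ Q, v j * greedySol n C s Q j := by
  set L := Q.filter fun j => greedySol n C s Q j < 1
  rcases L.eq_empty_or_nonempty with hL | hL
  · refine sum_mul_le_sum_mul_of_dual_certificate Q v s _ y le_rfl hyC (by simp)
      (fun j hj hlt => ?_) (fun j _ _ => by simpa using hv j)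
    have : j ∈ L := mem_filter.mpr ⟨hj, hlt.trans_le (hy1 j hj)⟩
    simp [hL] at this
  -- The dual price is the density of the first item the greedy solution does not take fully.
  set c := L.min' hL
  obtain ⟨hcQ, hc1⟩ := mem_filter.mp (L.min'_mem hL)
  refine sum_mul_le_sum_mul_of_dual_certificate Q v s _ y
    (div_nonneg (hv c) (hs c).le) hyC ?_ (fun j hj hlt => ?_) (fun j hj hlt => ?_)
  · have hfull : C ≤ ∑ k ∈ Q, s k :=
      (lt_sum_filter_le_of_greedySol_lt_one hs hcQ hc1).le.trans
        (sum_le_sum_of_subset_of_nonneg (filter_subset _ _) fun i _ _ => (hs i).le)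
    rw [sum_mul_greedySol hC hs, min_eq_left hfull]
  · have hcj : c ≤ j := L.min'_le j (mem_filter.mpr ⟨hj, hlt.trans_le (hy1 j hj)⟩)
    rw [← div_le_iff₀ (hs j)]
    exact hd hcj
  · have hjc : j ≤ c :=
      le_of_greedySol_lt_one_of_pos hs hcQ hj hc1 ((hy0 j hj).trans_lt hlt)
    rw [← le_div_iff₀ (hs j)]
    exact hd hjc

lemma sum_mul_greedySol_sub_insert_le (hC : 0 ≤ C) (hs : ∀ j, 0 < s j) {a : Fin n}
    (ha : a ∉ Q) :
    ∑ k ∈ Q, s k * (greedySol n C s Q k - greedySol n C s (insert a Q) k)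
      ≤ s a * greedySol n C s (insert a Q) a := by
  have hQ := sum_mul_greedySol hC hs Q
  have haQ := sum_mul_greedySol hC hs (insert a Q)
  have hmono : min C (∑ k ∈ Q, s k) ≤ min C (∑ k ∈ insert a Q, s k) := by
    refine min_le_min_left _ ?_
    rw [sum_insert ha]; linarith [hs a]
  rw [sum_insert ha] at haQ
  simp only [mul_sub, sum_sub_distrib]
  linarith

end Greedy

section Exchangeability

variable {α M : Type*} [Fintype α] [DecidableEq α] [AddCommMonoid M]

lemma sum_perm_eq_of_mul_swap (G : Equiv.Perm α → α → M) {p q : α}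
    (h : ∀ π, G (π * Equiv.swap p q) q = G π p) : ∑ π, G π p = ∑ π, G π q := by
  simp_rw [← h]
  exact Equiv.sum_comp (Equiv.mulRight (Equiv.swap p q)) (G · q)

lemma card_smul_sum_perm_sum_eq (G : Equiv.Perm α → α → M) {S A : Finset α} (hA : A ⊆ S)
    (h : ∀ π, ∀ p ∈ S, ∀ q ∈ S, G (π * Equiv.swap p q) q = G π p) :
    #S • ∑ π, ∑ k ∈ A, G π k = #A • ∑ π, ∑ k ∈ S, G π k := by
  rw [sum_comm, sum_comm (s := univ)]
  rcases S.eq_empty_or_nonempty with rfl | ⟨k₀, hk₀⟩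
  · simp [subset_empty.mp hA]
  have hconst : ∀ k ∈ S, ∑ π, G π k = ∑ π, G π k₀ :=
    fun k hk => sum_perm_eq_of_mul_swap G fun π => h π k hk k₀ hk₀
  rw [sum_congr rfl fun k hk => hconst k (hA hk), sum_congr rfl hconst, sum_const, sum_const,
    smul_smul, smul_smul, mul_comm]

end Exchangeability

section Qset

variable {n : ℕ} {π : Equiv.Perm (Fin n)} {m : ℕ}

lemma mem_Qset {j : Fin n} : j ∈ Qset n π m ↔ (π.symm j : ℕ) < m := by
  simp only [Qset, mem_image, mem_filter, mem_univ, true_and]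
  exact ⟨by rintro ⟨k, hk, rfl⟩; simpa using hk, fun h => ⟨π.symm j, h, π.apply_symm_apply j⟩⟩

lemma apply_notMem_Qset (k : Fin n) : π k ∉ Qset n π k := by
  simp [mem_Qset]

lemma Qset_succ (k : Fin n) : Qset n π (k + 1) = insert (π k) (Qset n π k) := by
  ext j
  rw [mem_Qset, mem_insert, mem_Qset, Nat.lt_succ_iff_lt_or_eq, ← π.symm_apply_eq, or_comm,
    Fin.val_inj]

lemma Qset_mul_swap {p q : Fin n} (hp : (p : ℕ) < m) (hq : (q : ℕ) < m) :
    Qset n (π * Equiv.swap p q) m = Qset n π m := by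
  ext j
  simp only [mem_Qset, Equiv.Perm.mul_def, Equiv.symm_trans_apply, Equiv.symm_swap,
    Equiv.swap_apply_def]
  split_ifs with h₁ h₂ <;> simp_all

lemma sum_Qset {M : Type*} [AddCommMonoid M] (f : Fin n → M) :
    ∑ j ∈ Qset n π m, f j = ∑ k ∈ univ.filter (fun k : Fin n => (k : ℕ) < m), f (π k) :=
  sum_image fun _ _ _ _ h => π.injective h

lemma card_filter_val_lt_of_le (hm : m ≤ n) :
    #(univ.filter fun k : Fin n => (k : ℕ) < m) = m := by
  rw [Fin.card_filter_val_lt, min_eq_right hm]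

lemma card_filter_le_val_and_val_lt (t : ℕ) (hm : m ≤ n) :
    #(univ.filter fun k : Fin n => t ≤ (k : ℕ) ∧ (k : ℕ) < m) = m - t := by
  rw [← card_map Fin.valEmbedding, ← Nat.card_Ico]
  congr 1
  ext i
  simp only [mem_map, mem_filter, mem_univ, true_and, Fin.valEmbedding_apply, mem_Ico]
  exact ⟨by rintro ⟨k, hk, rfl⟩; exact hk, fun hi => ⟨⟨i, by omega⟩, hi, rfl⟩⟩

lemma natCast_mul_sum_perm_sum_Qset (w : Fin n → ℝ) (hm : m ≤ n) :
    n * ∑ π : Equiv.Perm (Fin n), ∑ j ∈ Qset n π m, w j = m * (n.factorial * ∑ j, w j) := by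
  have h := card_smul_sum_perm_sum_eq (fun π k => w (π k))
    (subset_univ (univ.filter fun k : Fin n => (k : ℕ) < m)) (by simp)
  simp only [card_univ, Fintype.card_fin, card_filter_val_lt_of_le hm, nsmul_eq_mul] at h
  simp only [sum_Qset, h, Equiv.sum_comp, sum_const, card_univ, Fintype.card_perm,
    Fintype.card_fin, nsmul_eq_mul]

end Qset

section Rounds

variable {n : ℕ} {C : ℝ} {v s : Fin n → ℝ}

noncomputable def newestValue (n : ℕ) (C : ℝ) (v s : Fin n → ℝ) (π : Equiv.Perm (Fin n))
    (k : Fin n) : ℝ :=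
  v (π k) * greedySol n C s (Qset n π (k + 1)) (π k)

/-- The size of item `π k'` that the greedy solution drops when item `π k` arrives. -/
noncomputable def evictedSize (n : ℕ) (C : ℝ) (s : Fin n → ℝ) (π : Equiv.Perm (Fin n))
    (k k' : Fin n) : ℝ :=
  s (π k') *
    (greedySol n C s (Qset n π k) (π k') - greedySol n C s (Qset n π (k + 1)) (π k'))

lemma algFK_apply_of_lt {π : Equiv.Perm (Fin n)} {t : ℕ} {k : Fin n} (hk : (k : ℕ) < t) :
    algFK n C s π t (π k) = 0 := by
  simp [algFK, hk]

lemma mul_algFK_apply_of_le {π : Equiv.Perm (Fin n)} {t : ℕ} {k : Fin n} (hk : t ≤ (k : ℕ)) :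
    v (π k) * algFK n C s π t (π k) = newestValue n C v s π k
      - v (π k) / s (π k) *
          ∑ k' ∈ univ.filter (fun k' : Fin n => t ≤ (k' : ℕ) ∧ (k' : ℕ) < k),
            evictedSize n C s π k k' := by
  simp only [algFK, Equiv.symm_apply_apply, if_neg hk.not_gt, newestValue, evictedSize]
  ring

lemma sum_evictedSize_le (hC : 0 ≤ C) (hs : ∀ j, 0 < s j) (π : Equiv.Perm (Fin n))
    (k : Fin n) :
    ∑ k' ∈ univ.filter (fun k' : Fin n => (k' : ℕ) < k), evictedSize n C s π k k'
      ≤ s (π k) * greedySol n C s (Qset n π (k + 1)) (π k) := by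
  have h := sum_mul_greedySol_sub_insert_le hC hs (apply_notMem_Qset (π := π) k)
  rwa [← Qset_succ, sum_Qset] at h

lemma factorial_mul_le_sum_perm_newestValue (hC : 0 ≤ C) (hs : ∀ j, 0 < s j)
    (hv : ∀ j, 0 ≤ v j) (hd : Antitone fun j => v j / s j) (k : Fin n) :
    n.factorial * ∑ j, v j * greedySol n C s univ j
      ≤ n * ∑ π : Equiv.Perm (Fin n), newestValue n C v s π k := by
  have hk : (k : ℕ) + 1 ≤ n := k.isLt
  -- The newest item is uniformly distributed among the first `k + 1`.
  have hnewest : ((k : ℕ) + 1 : ℝ) * ∑ π : Equiv.Perm (Fin n), newestValue n C v s π k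
      = ∑ π : Equiv.Perm (Fin n), ∑ j ∈ Qset n π (k + 1),
          v j * greedySol n C s (Qset n π (k + 1)) j := by
    have h := card_smul_sum_perm_sum_eq
      (fun π k' => v (π k') * greedySol n C s (Qset n π (k + 1)) (π k'))
      (S := univ.filter fun k' : Fin n => (k' : ℕ) < k + 1)
      (singleton_subset_iff.mpr (mem_filter.mpr ⟨mem_univ k, Nat.lt_succ_self k⟩))
      (fun π p hp q hq => by
        rw [mem_filter] at hp hq
        simp only [Equiv.Perm.mul_apply, Equiv.swap_apply_right, Qset_mul_swap hp.2 hq.2])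
    simp only [card_filter_val_lt_of_le hk, card_singleton, sum_singleton, one_smul,
      nsmul_eq_mul] at h
    push_cast at h
    simp only [newestValue, h, sum_Qset]
  have hopt : ∀ π : Equiv.Perm (Fin n), ∑ j ∈ Qset n π (k + 1), v j * greedySol n C s univ j
      ≤ ∑ j ∈ Qset n π (k + 1), v j * greedySol n C s (Qset n π (k + 1)) j := by
    refine fun π => sum_mul_le_sum_mul_greedySol hC hs hv hd _
      (fun j _ => greedySol_nonneg j) (fun j _ => greedySol_le_one j) ?_
    calc ∑ j ∈ Qset n π (k + 1), s j * greedySol n C s univ j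
        ≤ ∑ j, s j * greedySol n C s univ j :=
          sum_le_sum_of_subset_of_nonneg (subset_univ _)
            fun j _ _ => mul_nonneg (hs j).le (greedySol_nonneg j)
      _ = min C (∑ j, s j) := sum_mul_greedySol hC hs univ
      _ ≤ C := min_le_left _ _
  have hprefix := natCast_mul_sum_perm_sum_Qset (fun j => v j * greedySol n C s univ j) hk
  push_cast at hprefix
  have hk0 : (0 : ℝ) < (k : ℕ) + 1 := by positivity
  refine le_of_mul_le_mul_left ?_ hk0
  calc ((k : ℕ) + 1 : ℝ) * (n.factorial * ∑ j, v j * greedySol n C s univ j)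
      = n * ∑ π : Equiv.Perm (Fin n), ∑ j ∈ Qset n π (k + 1), v j * greedySol n C s univ j :=
        hprefix.symm
    _ ≤ n * ∑ π : Equiv.Perm (Fin n), ∑ j ∈ Qset n π (k + 1),
          v j * greedySol n C s (Qset n π (k + 1)) j :=
        mul_le_mul_of_nonneg_left (sum_le_sum fun π _ => hopt π) (Nat.cast_nonneg n)
    _ = ((k : ℕ) + 1 : ℝ) * (n * ∑ π : Equiv.Perm (Fin n), newestValue n C v s π k) := by
        rw [← hnewest]; ring

lemma natCast_mul_factorial_mul_le_sum_perm_mul_algFK (hC : 0 ≤ C) (hs : ∀ j, 0 < s j)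
    (hv : ∀ j, 0 ≤ v j) (hd : Antitone fun j => v j / s j) {t : ℕ} {k : Fin n}
    (htk : t ≤ (k : ℕ)) :
    t * (n.factorial * ∑ j, v j * greedySol n C s univ j)
      ≤ n * k * ∑ π : Equiv.Perm (Fin n), v (π k) * algFK n C s π t (π k) := by
  set loss : Equiv.Perm (Fin n) → Fin n → ℝ :=
    fun π k' => v (π k) / s (π k) * evictedSize n C s π k k'
  set newest := ∑ π : Equiv.Perm (Fin n), newestValue n C v s π k
  -- The rounds `k' < k` are exchangeable, and `k - t` of them come after the sample.
  have hexch : (k : ℝ) *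
        ∑ π, ∑ k' ∈ univ.filter (fun k' : Fin n => t ≤ (k' : ℕ) ∧ (k' : ℕ) < k), loss π k'
      = (k - t : ℝ) * ∑ π, ∑ k' ∈ univ.filter (fun k' : Fin n => (k' : ℕ) < k), loss π k' := by
    have h := card_smul_sum_perm_sum_eq loss
      (monotone_filter_right univ (p := fun k' : Fin n => t ≤ (k' : ℕ) ∧ (k' : ℕ) < k)
        (q := fun k' : Fin n => (k' : ℕ) < k) fun _ _ h => h.2)
      (fun π p hp q hq => by
        rw [mem_filter] at hp hq
        have hkp : k ≠ p := Fin.ne_of_val_ne (by omega)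
        have hkq : k ≠ q := Fin.ne_of_val_ne (by omega)
        simp only [loss, evictedSize, Equiv.Perm.mul_apply, Equiv.swap_apply_right,
          Equiv.swap_apply_of_ne_of_ne hkp hkq, Qset_mul_swap hp.2 hq.2,
          Qset_mul_swap (hp.2.trans k.val.lt_succ_self) (hq.2.trans k.val.lt_succ_self)])
    rwa [card_filter_val_lt_of_le k.isLt.le, card_filter_le_val_and_val_lt t k.isLt.le,
      nsmul_eq_mul, nsmul_eq_mul, Nat.cast_sub htk] at h
  have hloss : ∀ π, ∑ k' ∈ univ.filter (fun k' : Fin n => (k' : ℕ) < k), loss π k'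
      ≤ newestValue n C v s π k := by
    intro π
    calc ∑ k' ∈ univ.filter (fun k' : Fin n => (k' : ℕ) < k), loss π k'
        ≤ v (π k) / s (π k) * (s (π k) * greedySol n C s (Qset n π (k + 1)) (π k)) := by
          rw [← mul_sum]
          exact mul_le_mul_of_nonneg_left (sum_evictedSize_le hC hs π k)
            (div_nonneg (hv _) (hs _).le)
      _ = newestValue n C v s π k := by
          rw [newestValue]; field_simp [(hs (π k)).ne']
  have hvalue : ∑ π : Equiv.Perm (Fin n), v (π k) * algFK n C s π t (π k)
      = newest - ∑ π, ∑ k' ∈ univ.filter (fun k' : Fin n => t ≤ (k' : ℕ) ∧ (k' : ℕ) < k),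
          loss π k' := by
    simp only [mul_algFK_apply_of_le htk, sum_sub_distrib, loss, mul_sum, newest]
  have hround :
      t * newest ≤ k * ∑ π : Equiv.Perm (Fin n), v (π k) * algFK n C s π t (π k) := by
    have htk' : (0 : ℝ) ≤ k - t := sub_nonneg.mpr (by exact_mod_cast htk)
    have hsum := mul_le_mul_of_nonneg_left (sum_le_sum fun π (_ : π ∈ univ) => hloss π) htk'
    rw [hvalue, mul_sub, hexch]
    linarith
  calc t * (n.factorial * ∑ j, v j * greedySol n C s univ j) ≤ t * (n * newest) :=
        mul_le_mul_of_nonneg_left (factorial_mul_le_sum_perm_newestValue hC hs hv hd k)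
          (Nat.cast_nonneg t)
    _ = n * (t * newest) := by ring
    _ ≤ n * k * ∑ π : Equiv.Perm (Fin n), v (π k) * algFK n C s π t (π k) := by
        rw [mul_assoc]; exact mul_le_mul_of_nonneg_left hround (Nat.cast_nonneg n)

end Rounds

lemma sum_Icc_one_div_sub_one (t n : ℕ) :
    ∑ ℓ ∈ Icc (t + 1) n, 1 / ((ℓ : ℝ) - 1) = ∑ m ∈ Ico t n, (m : ℝ)⁻¹ := by
  rw [← Ico_add_one_right_eq_Icc, ← sum_Ico_add' (fun ℓ : ℕ => 1 / ((ℓ : ℝ) - 1))]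
  simp

lemma log_sub_log_le_sum_Ico_inv {t n : ℕ} (ht : 0 < t) (htn : t ≤ n) :
    Real.log n - Real.log t ≤ ∑ m ∈ Ico t n, (m : ℝ)⁻¹ := by
  have htR : (0 : ℝ) < t := by exact_mod_cast ht
  have hnR : (0 : ℝ) < n := htR.trans_le (by exact_mod_cast htn)
  have h := (inv_antitoneOn_Icc_right (b := (n : ℝ)) htR).integral_le_sum_Ico htn
  rwa [integral_inv_of_pos htR hnR, Real.log_div hnR.ne' htR.ne'] at h

lemma sum_fin_ite_le_eq_sum_Ico (g : ℕ → ℝ) (t n : ℕ) :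
    ∑ k : Fin n, (if t ≤ (k : ℕ) then g k else 0) = ∑ m ∈ Ico t n, g m := by
  rw [Fin.sum_univ_eq_sum_range (fun m => if t ≤ m then g m else 0), ← sum_filter,
    range_eq_Ico, Ico_filter_le_of_left_le (Nat.zero_le t)]

lemma le_sum_perm_sum_mul_algFK {n : ℕ} {C : ℝ} {v s : Fin n → ℝ} (hC : 0 ≤ C)
    (hs : ∀ j, 0 < s j) (hv : ∀ j, 0 ≤ v j) (hd : Antitone fun j => v j / s j) {t : ℕ}
    (ht : 0 < t) :
    t / n * (∑ m ∈ Ico t n, (m : ℝ)⁻¹) * (n.factorial * ∑ j, v j * greedySol n C s univ j)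
      ≤ ∑ π : Equiv.Perm (Fin n), ∑ j, v j * algFK n C s π t j := by
  set V := n.factorial * ∑ j, v j * greedySol n C s univ j
  have hround : ∀ k : Fin n, (if t ≤ (k : ℕ) then t * V / (n * k) else 0)
      ≤ ∑ π : Equiv.Perm (Fin n), v (π k) * algFK n C s π t (π k) := by
    intro k
    split_ifs with htk
    · have hnk : (0 : ℝ) < n * k := by
        have : 0 < (k : ℕ) := ht.trans_le htk
        have : 0 < n := k.pos
        positivity
      rw [div_le_iff₀ hnk, mul_comm _ (n * (k : ℝ))]
      exact natCast_mul_factorial_mul_le_sum_perm_mul_algFK hC hs hv hd htk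
    · simp [algFK_apply_of_lt (not_le.mp htk)]
  calc t / n * (∑ m ∈ Ico t n, (m : ℝ)⁻¹) * V = ∑ m ∈ Ico t n, t * V / (n * m) := by
        rw [mul_sum, sum_mul]; congr! 1 with m; field_simp
    _ = ∑ k : Fin n, (if t ≤ (k : ℕ) then t * V / (n * k) else 0) :=
        (sum_fin_ite_le_eq_sum_Ico (fun m => t * V / (n * m)) t n).symm
    _ ≤ ∑ k : Fin n, ∑ π : Equiv.Perm (Fin n), v (π k) * algFK n C s π t (π k) :=
        sum_le_sum fun k _ => hround k
    _ = ∑ π : Equiv.Perm (Fin n), ∑ j, v j * algFK n C s π t j := by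
        rw [sum_comm]
        exact sum_congr rfl fun π _ => Equiv.sum_comp π (fun j => v j * algFK n C s π t j)

/-- Let `x` be the output of Algorithm `FractionalKnapsack` with
sample size `t ∈ {1,…,n−1}`, where the permutation `π` is uniformly random. Then
`E[v(x)] ≥ (t/n) · Σ_{ℓ=t+1}^n 1/(ℓ−1) · v(x̃([n])) ≥ (t/n)(ln n − ln t) · v(x̃([n]))`.
In particular, for `t = ⌊n/e⌋` (and `n ≥ 3`, so that `t ≥ 1`),
`E[v(x)] ≥ (⌊n/e⌋/n)(ln n − ln ⌊n/e⌋) · v(x̃([n]))`. -/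
theorem algFK_expected_value_bound
    (n : ℕ) (C : ℝ) (hC : 0 < C)
    (v s : Fin n → ℝ)
    (hv : ∀ j, 0 < v j) (hs : ∀ j, 0 < s j ∧ s j ≤ C)
    (hd : ∀ j k : Fin n, j < k → v k / s k < v j / s j)
    (t : ℕ) (ht1 : 1 ≤ t) (ht2 : t < n) :
    ((∑ π : Equiv.Perm (Fin n), ∑ j, v j * algFK n C s π t j) / (n.factorial : ℝ)
        ≥ ((t : ℝ) / n) * (∑ ℓ ∈ Finset.Icc (t + 1) n, 1 / ((ℓ : ℝ) - 1))
            * (∑ j, v j * greedySol n C s Finset.univ j)) ∧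
    (((t : ℝ) / n) * (∑ ℓ ∈ Finset.Icc (t + 1) n, 1 / ((ℓ : ℝ) - 1))
            * (∑ j, v j * greedySol n C s Finset.univ j)
        ≥ ((t : ℝ) / n) * (Real.log n - Real.log t)
            * (∑ j, v j * greedySol n C s Finset.univ j)) ∧
    (t = ⌊(n : ℝ) / Real.exp 1⌋₊ → 3 ≤ n →
      (∑ π : Equiv.Perm (Fin n), ∑ j, v j * algFK n C s π t j) / (n.factorial : ℝ)
        ≥ ((t : ℝ) / n) * (Real.log n - Real.log t)
            * (∑ j, v j * greedySol n C s Finset.univ j)) := by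
  set V := ∑ j, v j * greedySol n C s univ j
  have hV : 0 ≤ V := sum_nonneg fun j _ => mul_nonneg (hv j).le (greedySol_nonneg j)
  have hexpected : (t : ℝ) / n * (∑ ℓ ∈ Icc (t + 1) n, 1 / ((ℓ : ℝ) - 1)) * V
      ≤ (∑ π : Equiv.Perm (Fin n), ∑ j, v j * algFK n C s π t j) / n.factorial := by
    rw [le_div_iff₀ (by exact_mod_cast n.factorial_pos), sum_Icc_one_div_sub_one, mul_assoc,
      mul_comm _ (n.factorial : ℝ)]
    exact le_sum_perm_sum_mul_algFK hC.le (fun j => (hs j).1) (fun j => (hv j).le)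
      (StrictAnti.antitone hd) ht1
  have hlog : (t : ℝ) / n * (Real.log n - Real.log t) * V
      ≤ (t : ℝ) / n * (∑ ℓ ∈ Icc (t + 1) n, 1 / ((ℓ : ℝ) - 1)) * V := by
    rw [sum_Icc_one_div_sub_one]
    gcongr
    exact log_sub_log_le_sum_Ico_inv ht1 ht2.le
  exact ⟨hexpected, hlog, fun _ _ => hlog.trans hexpected⟩
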